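/- Let Ω be a finite state space, μ a probability measure on Ω, F = {f_1,…,f_m} a family of subsets (flaws) of Ω, and for each i and each σ ∈ f_i let ρ_i(σ,·) be a probability distribution on Ω. Define the charge γ_i = max_{τ∈Ω} Σ_{σ∈f_i} (μ(σ)/μ(τ)) ρ_i(σ,τ). Suppose Γ(i) ⊆ [m] is such that for every j ∉ Γ(i)∪{i}, addressing flaw f_i cannot cause f_j (i.e., for every transition σ→τ with ρ_i(σ,τ)>0, if τ ∈ f_j then σ ∈ f_j). Then for every S ⊆ [m]\(Γ(i)∪{i}), μ(f_i | ∩_{j∈S} complement(f_j)) ≤ γ_i. -/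

import Mathlib

/-!
Let `B` be the set of states avoiding every flaw in `S`. By causality, addressing `f i` from a
state of `B ∩ f i` never leads out of `B`, so the mass `μ σ` of each such state is fully
transported into `B`. Summing the transported mass over the targets `τ ∈ B` and bounding the
mass arriving at `τ` by the charge, `γ μ τ`, gives `μ(B ∩ f i) ≤ γ μ(B)`.
-/

open Finset

section Transport

variable {Ω : Type*} {μ : Ω → ℝ} {ρ : Ω → Ω → ℝ} {A B : Finset Ω} {γ : ℝ}

lemma charge_nonneg [Nonempty Ω] (hμ : ∀ σ, 0 < μ σ) (hρ : ∀ σ τ, 0 ≤ ρ σ τ)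
    (hγ : ∀ τ, ∑ σ ∈ A, μ σ / μ τ * ρ σ τ ≤ γ) : 0 ≤ γ :=
  (sum_nonneg fun σ _ => mul_nonneg (div_nonneg (hμ σ).le (hμ _).le) (hρ σ _)).trans
    (hγ (Classical.arbitrary Ω))

lemma sum_mul_le_charge_mul {τ : Ω} (hμτ : 0 < μ τ)
    (hγ : ∑ σ ∈ A, μ σ / μ τ * ρ σ τ ≤ γ) : ∑ σ ∈ A, μ σ * ρ σ τ ≤ γ * μ τ := by
  calc ∑ σ ∈ A, μ σ * ρ σ τ = (∑ σ ∈ A, μ σ / μ τ * ρ σ τ) * μ τ := by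
        rw [sum_mul]
        refine sum_congr rfl fun σ _ => ?_
        field_simp
    _ ≤ γ * μ τ := mul_le_mul_of_nonneg_right hγ hμτ.le

variable [Fintype Ω]

lemma sum_kernel_eq_one_of_support_subset {σ : Ω} (hρ : ∀ τ, 0 ≤ ρ σ τ)
    (hρsum : ∑ τ, ρ σ τ = 1) (hsupp : ∀ τ, 0 < ρ σ τ → τ ∈ B) : ∑ τ ∈ B, ρ σ τ = 1 := by
  rw [← hρsum]
  refine sum_subset (subset_univ B) fun τ _ hτ => ?_
  exact le_antisymm (not_lt.mp fun h => hτ (hsupp τ h)) (hρ τ)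

lemma sum_inter_le_charge_mul_sum [DecidableEq Ω] (hμ : ∀ σ, 0 < μ σ) (hρ : ∀ σ τ, 0 ≤ ρ σ τ)
    (hρsum : ∀ σ ∈ A, ∑ τ, ρ σ τ = 1) (hclosed : ∀ σ ∈ B ∩ A, ∀ τ, 0 < ρ σ τ → τ ∈ B)
    (hγ : ∀ τ, ∑ σ ∈ A, μ σ / μ τ * ρ σ τ ≤ γ) :
    ∑ σ ∈ B ∩ A, μ σ ≤ γ * ∑ σ ∈ B, μ σ := by
  have hmass : ∀ σ ∈ B ∩ A, μ σ = ∑ τ ∈ B, μ σ * ρ σ τ := fun σ hσ => by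
    rw [← mul_sum, sum_kernel_eq_one_of_support_subset (hρ σ) (hρsum σ (mem_inter.mp hσ).2)
      (hclosed σ hσ), mul_one]
  calc ∑ σ ∈ B ∩ A, μ σ = ∑ σ ∈ B ∩ A, ∑ τ ∈ B, μ σ * ρ σ τ := sum_congr rfl hmass
    _ = ∑ τ ∈ B, ∑ σ ∈ B ∩ A, μ σ * ρ σ τ := sum_comm
    _ ≤ ∑ τ ∈ B, ∑ σ ∈ A, μ σ * ρ σ τ := sum_le_sum fun τ _ =>
        sum_le_sum_of_subset_of_nonneg inter_subset_right fun σ _ _ =>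
          mul_nonneg (hμ σ).le (hρ σ τ)
    _ ≤ ∑ τ ∈ B, γ * μ τ := sum_le_sum fun τ _ => sum_mul_le_charge_mul (hμ τ) (hγ τ)
    _ = γ * ∑ τ ∈ B, μ τ := (mul_sum _ _ _).symm

end Transport

/-- Algorithmic charges bound conditional probabilities (Theorem `causality_lopsi`). -/
theorem stmt_0 {Ω : Type*} [Fintype Ω] [DecidableEq Ω] (μ : Ω → ℝ)
    (hμpos : ∀ σ, 0 < μ σ) (hμsum : ∑ σ, μ σ = 1)
    (m : ℕ) (f : Fin m → Finset Ω) (ρ : Fin m → Ω → Ω → ℝ)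
    (hρnonneg : ∀ i σ τ, 0 ≤ ρ i σ τ)
    (hρsum : ∀ i, ∀ σ ∈ f i, ∑ τ, ρ i σ τ = 1)
    (i : Fin m) (Γ : Finset (Fin m))
    (hcause : ∀ j, j ∉ Γ → j ≠ i → ∀ σ τ, 0 < ρ i σ τ → τ ∈ f j → σ ∈ f j)
    (γ : ℝ) (hγ : ∀ τ, ∑ σ ∈ f i, μ σ / μ τ * ρ i σ τ ≤ γ)
    (S : Finset (Fin m)) (hS : ∀ j ∈ S, j ∉ Γ ∧ j ≠ i) :
    (∑ σ ∈ (Finset.univ.filter (fun σ => ∀ j ∈ S, σ ∉ f j)) ∩ f i, μ σ) /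
      (∑ σ ∈ Finset.univ.filter (fun σ => ∀ j ∈ S, σ ∉ f j), μ σ) ≤ γ := by
  -- When no state avoids `S` the quotient is the junk value `0 / 0 = 0`, so `0 ≤ γ` is needed.
  have : Nonempty Ω := by
    by_contra h
    simp [not_nonempty_iff.mp h] at hμsum
  have hγ0 : 0 ≤ γ := charge_nonneg hμpos (hρnonneg i) hγ
  have hclosed : ∀ σ ∈ (univ.filter fun σ => ∀ j ∈ S, σ ∉ f j) ∩ f i, ∀ τ, 0 < ρ i σ τ →
      τ ∈ univ.filter fun σ => ∀ j ∈ S, σ ∉ f j := by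
    intro σ hσ τ hρ
    simp only [mem_inter, mem_filter, mem_univ, true_and] at hσ ⊢
    exact fun j hj hτ => hσ.1 j hj (hcause j (hS j hj).1 (hS j hj).2 σ τ hρ hτ)
  exact div_le_of_le_mul₀ (sum_nonneg fun σ _ => (hμpos σ).le) hγ0
    (sum_inter_le_charge_mul_sum hμpos (hρnonneg i) (hρsum i) hclosed hγ)
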